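/- arXiv:0803.2620 — 7 statements merged into one kernel-verified Lean document; each statement's English description precedes it below -/
import Mathlib

section
/- Let D be a division ring, k a finite type, A : Matrix k k D a matrix possessing a two-sided inverse B (i.e. A * B = 1 and B * A = 1), and let b : k → D, c : k → D, d : D. Then the (|k|+1)×(|k|+1) block matrix fromBlocks A (column b) (row c) (scalar d) is invertible (is a unit of the matrix ring) if and only if the Schur complement d - (∑ i, ∑ j, c i * B i j * b j) is nonzero. -/
open Matrix

section RingVersions

variable {m n α : Type*} [Fintype m] [Fintype n]
variable [DecidableEq m] [DecidableEq n] [Ring α]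

namespace ForStmt

/-- LDU decomposition of a block matrix with an invertible top-left corner, using the
Schur complement (ring version). -/
theorem fromBlocks_eq_of_invertible₁₁' (A : Matrix m m α) (B : Matrix m n α) (C : Matrix n m α)
    (D : Matrix n n α) [Invertible A] :
    fromBlocks A B C D =
      fromBlocks 1 0 (C * ⅟ A) 1 * fromBlocks A 0 0 (D - C * ⅟ A * B) *
        fromBlocks 1 (⅟ A * B) 0 1 := by
  simp only [fromBlocks_multiply, Matrix.mul_zero, Matrix.zero_mul, add_zero, zero_add,
    Matrix.one_mul, Matrix.mul_one, invOf_mul_self, Matrix.mul_invOf_cancel_left,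
    Matrix.invOf_mul_cancel_right, Matrix.mul_assoc, add_sub_cancel]

/-- A lower unitriangular block matrix is invertible (ring version). -/
def lowerUnitriangularInvertible (C : Matrix n m α) :
    Invertible (fromBlocks 1 0 C 1 : Matrix (m ⊕ n) (m ⊕ n) α) :=
  ⟨fromBlocks 1 0 (-C) 1, by
      simp only [fromBlocks_multiply, Matrix.mul_zero, Matrix.zero_mul, add_zero, zero_add,
        Matrix.one_mul, Matrix.mul_one, neg_add_cancel, add_neg_cancel, ← fromBlocks_one], by
      simp only [fromBlocks_multiply, Matrix.mul_zero, Matrix.zero_mul, add_zero, zero_add,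
        Matrix.one_mul, Matrix.mul_one, neg_add_cancel, add_neg_cancel, ← fromBlocks_one]⟩

/-- An upper unitriangular block matrix is invertible (ring version). -/
def upperUnitriangularInvertible (B : Matrix m n α) :
    Invertible (fromBlocks 1 B 0 1 : Matrix (m ⊕ n) (m ⊕ n) α) :=
  ⟨fromBlocks 1 (-B) 0 1, by
      simp only [fromBlocks_multiply, Matrix.mul_zero, Matrix.zero_mul, add_zero, zero_add,
        Matrix.one_mul, Matrix.mul_one, neg_add_cancel, add_neg_cancel, ← fromBlocks_one], by
      simp only [fromBlocks_multiply, Matrix.mul_zero, Matrix.zero_mul, add_zero, zero_add,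
        Matrix.one_mul, Matrix.mul_one, neg_add_cancel, add_neg_cancel, ← fromBlocks_one]⟩

/-- Sandwiching by invertible elements preserves `IsUnit`. -/
theorem isUnit_conj_iff {M : Type*} [Monoid M] (a b c : M) [Invertible a] [Invertible c] :
    IsUnit (a * b * c) ↔ IsUnit b := by
  constructor
  · intro h
    have hb : b = ⅟ a * (a * b * c) * ⅟ c := by
      simp [mul_assoc]
    rw [hb]
    exact ((isUnit_of_invertible (⅟ a)).mul h).mul (isUnit_of_invertible (⅟ c))
  · intro h
    exact ((isUnit_of_invertible a).mul h).mul (isUnit_of_invertible c)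

/-- A block diagonal matrix with invertible top-left block is a unit iff the bottom-right
block is a unit (ring version). -/
theorem isUnit_fromBlocks_diag_iff {A : Matrix m m α} {S : Matrix n n α} [Invertible A] :
    IsUnit (fromBlocks A 0 0 S : Matrix (m ⊕ n) (m ⊕ n) α) ↔ IsUnit S := by
  constructor
  · intro h
    obtain ⟨N, h1, h2⟩ := isUnit_iff_exists.mp h
    rw [← fromBlocks_toBlocks N, fromBlocks_multiply, ← fromBlocks_one] at h1 h2
    have e1 := congr_arg Matrix.toBlocks₂₂ h1
    have e2 := congr_arg Matrix.toBlocks₂₂ h2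
    simp only [Matrix.toBlocks_fromBlocks₂₂, Matrix.zero_mul, Matrix.mul_zero, zero_add,
      add_zero] at e1 e2
    exact ⟨⟨S, _, e1, e2⟩, rfl⟩
  · intro h
    cases h.nonempty_invertible
    letI : Invertible (fromBlocks A 0 0 S : Matrix (m ⊕ n) (m ⊕ n) α) :=
      ⟨fromBlocks (⅟ A) 0 0 (⅟ S), by
        simp only [fromBlocks_multiply, Matrix.mul_zero, Matrix.zero_mul, add_zero, zero_add,
          invOf_mul_self, ← fromBlocks_one], by
        simp only [fromBlocks_multiply, Matrix.mul_zero, Matrix.zero_mul, add_zero, zero_add,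
          mul_invOf_self, ← fromBlocks_one]⟩
    exact isUnit_of_invertible _

/-- If the top-left block is invertible, the block matrix is a unit iff the Schur complement
is (ring version). -/
theorem isUnit_fromBlocks_iff_of_invertible₁₁' {A : Matrix m m α} {B : Matrix m n α}
    {C : Matrix n m α} {D : Matrix n n α} [Invertible A] :
    IsUnit (fromBlocks A B C D) ↔ IsUnit (D - C * ⅟ A * B) := by
  letI iL := lowerUnitriangularInvertible (m := m) (α := α) (C * ⅟ A)
  letI iU := upperUnitriangularInvertible (n := n) (α := α) (⅟ A * B)
  rw [fromBlocks_eq_of_invertible₁₁' A B C D, isUnit_conj_iff, isUnit_fromBlocks_diag_iff]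

end ForStmt

end RingVersions

theorem stmt_0 {D : Type*} [DivisionRing D] {k : Type*} [Fintype k] [DecidableEq k]
    (A B : Matrix k k D) (hAB : A * B = 1) (hBA : B * A = 1)
    (b c : k → D) (d : D) :
    IsUnit (Matrix.fromBlocks A (Matrix.of fun i (_ : Unit) => b i)
      (Matrix.of fun (_ : Unit) j => c j) (Matrix.of fun (_ : Unit) (_ : Unit) => d)) ↔
      d - ∑ i, ∑ j, c i * B i j * b j ≠ 0 := by
  letI : Invertible A := ⟨B, hBA, hAB⟩
  rw [ForStmt.isUnit_fromBlocks_iff_of_invertible₁₁']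
  have hinv : (⅟ A : Matrix k k D) = B := rfl
  rw [hinv]
  set M : Matrix Unit Unit D :=
    (Matrix.of fun (_ : Unit) (_ : Unit) => d) -
      (Matrix.of fun (_ : Unit) j => c j) * B * (Matrix.of fun i (_ : Unit) => b i) with hM
  have hentry : M () () = d - ∑ i, ∑ j, c i * B i j * b j := by
    simp only [hM, Matrix.sub_apply, Matrix.mul_apply, Matrix.of_apply]
    congr 1
    rw [Finset.sum_comm]
    exact Finset.sum_congr rfl fun j _ => by rw [Finset.sum_mul]
  constructor
  · rintro ⟨u, hu⟩ h0
    have hM0 : M = 0 := by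
      ext i j
      cases i; cases j
      rw [hentry, h0]
      rfl
    have h1 := u.mul_inv
    rw [hu, hM0, Matrix.zero_mul] at h1
    have := congr_fun (congr_fun h1 ()) ()
    simp only [Matrix.zero_apply, Matrix.one_apply_eq] at this
    exact zero_ne_one this
  · intro h0
    have hm : M () () ≠ 0 := by rw [hentry]; exact h0
    have hmul : M * (Matrix.of fun _ _ => (M () ())⁻¹) = 1 := by
      ext i j
      rw [Matrix.mul_apply]
      simp only [Finset.univ_unique, Finset.sum_singleton, Matrix.of_apply]
      cases i; cases j
      rw [mul_inv_cancel₀ hm, Matrix.one_apply_eq]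
    have hmul' : (Matrix.of fun _ _ => (M () ())⁻¹) * M = 1 := by
      ext i j
      rw [Matrix.mul_apply]
      simp only [Finset.univ_unique, Finset.sum_singleton, Matrix.of_apply]
      cases i; cases j
      rw [inv_mul_cancel₀ hm, Matrix.one_apply_eq]
    exact ⟨⟨M, _, hmul, hmul'⟩, rfl⟩
end

section
/- Let D be a division ring, A : Matrix m n D with m, n finite, and k ≤ |m|, k ≤ |n|. Suppose there are injections S : Fin k ↪ m and T : Fin k ↪ n such that the k×k submatrix A.submatrix S T is invertible, while every (k+1)×(k+1) square submatrix of A is not invertible. Then every row of A is a left linear combination of the rows indexed by S; that is, for every p : m there exist coefficients r : Fin k → D with A p = ∑ s, r s • A (S s) (equivalently A p j = ∑ s, r s * A (S s) j for all j). -/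
/-! Let `B = A_{S,T}` and, for a row `p ∉ S`, take `r = A_{p,T} B⁻¹`; then `r B = A_{p,T}`, so the
identity holds in the columns of `T`. If it failed in a column `j ∉ T`, the `(k+1)`-minor on rows
`S ∪ {p}` and columns `T ∪ {j}` would be block-triangular up to the unipotent factor
`[[1, 0], [A_{p,T} B⁻¹, 1]]`, with diagonal blocks `B` and the `1 × 1` Schur complement
`A p j - r ⬝ A_{S,j} ≠ 0`; hence it would be invertible, contradicting maximality. -/

open Matrix

namespace Matrix

theorem submatrix_sumElim_sumElim {α m n ι₁ ι₂ κ₁ κ₂ : Type*} (A : Matrix m n α) (f₁ : ι₁ → m)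
    (f₂ : ι₂ → m) (g₁ : κ₁ → n) (g₂ : κ₂ → n) :
    A.submatrix (Sum.elim f₁ f₂) (Sum.elim g₁ g₂) =
      fromBlocks (A.submatrix f₁ g₁) (A.submatrix f₁ g₂) (A.submatrix f₂ g₁)
        (A.submatrix f₂ g₂) := by
  ext (i | i) (j | j) <;> rfl

variable {α : Type*} [Ring α]

theorem IsUnit.submatrix_equiv {ι κ : Type*} [Fintype ι] [DecidableEq ι] [Fintype κ]
    [DecidableEq κ] {M : Matrix ι ι α} (hM : IsUnit M) (e : κ ≃ ι) : IsUnit (M.submatrix e e) :=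
  hM.map (reindexRingEquiv α e.symm)

section Block

/- Mathlib's block-inversion lemmas assume a commutative ring. -/

variable {m n : Type*} [Fintype m] [Fintype n] [DecidableEq m] [DecidableEq n]

theorem IsUnit.fromBlocks_zero₂₁ {A : Matrix m m α} {D : Matrix n n α} (hA : IsUnit A)
    (hD : IsUnit D) (B : Matrix m n α) : IsUnit (fromBlocks A B 0 D) := by
  cases hA.nonempty_invertible
  cases hD.nonempty_invertible
  refine ⟨⟨fromBlocks A B 0 D, fromBlocks (⅟A) (-(⅟A * B * ⅟D)) 0 (⅟D), ?_, ?_⟩, rfl⟩ <;>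
    simp [fromBlocks_multiply, Matrix.mul_assoc, ← Matrix.mul_assoc A, fromBlocks_one]

theorem IsUnit.fromBlocks_zero₁₂ {A : Matrix m m α} {D : Matrix n n α} (hA : IsUnit A)
    (hD : IsUnit D) (C : Matrix n m α) : IsUnit (fromBlocks A 0 C D) := by
  simpa [fromBlocks_submatrix_sum_swap_sum_swap] using
    (hD.fromBlocks_zero₂₁ hA C).submatrix_equiv (Equiv.sumComm m n)

theorem isUnit_fromBlocks_of_isUnit_schur₁₁ {A : Matrix m m α} [Invertible A]
    {B : Matrix m n α} {C : Matrix n m α} {D : Matrix n n α} (h : IsUnit (D - C * ⅟A * B)) :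
    IsUnit (fromBlocks A B C D) := by
  have factor : fromBlocks A B C D =
      fromBlocks 1 0 (C * ⅟A) 1 * fromBlocks A B 0 (D - C * ⅟A * B) := by
    simp [fromBlocks_multiply, Matrix.mul_assoc]
  rw [factor]
  exact (isUnit_one.fromBlocks_zero₁₂ isUnit_one _).mul
    ((isUnit_of_invertible A).fromBlocks_zero₂₁ h B)

end Block

theorem isUnit_submatrix_sumElim_of_isUnit_sub {m n ι : Type*} [Fintype ι] [DecidableEq ι]
    (A : Matrix m n α) (f : ι → m) (g : ι → n) [Invertible (A.submatrix f g)] (p : m) (j : n)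
    (h : IsUnit (A p j - ((fun i => A p (g i)) ᵥ* ⅟(A.submatrix f g)) ⬝ᵥ fun i => A (f i) j)) :
    IsUnit (A.submatrix (Sum.elim f fun _ : Fin 1 => p) (Sum.elim g fun _ : Fin 1 => j)) := by
  rw [submatrix_sumElim_sumElim]
  refine isUnit_fromBlocks_of_isUnit_schur₁₁ ?_
  convert h.map (scalar (Fin 1))
  ext a b
  simp [Subsingleton.elim a b, mul_apply, vecMul, dotProduct]

end Matrix

theorem Fin.snoc_eq_sumElim_comp_finSumFinEquiv_symm {α : Type*} {k : ℕ} (x : Fin k → α)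
    (a : α) : Fin.snoc x a = Sum.elim x (fun _ : Fin 1 => a) ∘ finSumFinEquiv.symm := by
  funext i
  refine Fin.lastCases ?_ (fun i => ?_) i <;> simp

theorem stmt_1_general {D : Type*} [DivisionRing D] {m n : Type*} [Fintype m] [Fintype n]
    (A : Matrix m n D) (k : ℕ)
    (S : Fin k ↪ m) (T : Fin k ↪ n)
    (hminor : IsUnit (A.submatrix ⇑S ⇑T))
    (hmax : ∀ (S' : Fin (k + 1) ↪ m) (T' : Fin (k + 1) ↪ n),
      ¬ IsUnit (A.submatrix ⇑S' ⇑T')) :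
    ∀ p : m, ∃ r : Fin k → D, ∀ j : n, A p j = ∑ s, r s * A (S s) j := by
  intro p
  by_cases hp : p ∈ Set.range S
  · obtain ⟨s₀, rfl⟩ := hp
    exact ⟨Pi.single s₀ 1, fun j => by simp [Pi.single_apply]⟩
  have := hminor.invertible
  set r := (fun t => A p (T t)) ᵥ* ⅟(A.submatrix S T)
  refine ⟨r, fun j => ?_⟩
  by_cases hj : j ∈ Set.range T
  · obtain ⟨t, rfl⟩ := hj
    have hr : r ᵥ* A.submatrix S T = fun t => A p (T t) := by
      simp [r, vecMul_vecMul]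
    exact (congrFun hr t).symm
  by_contra hne
  refine hmax (Fin.Embedding.snoc S hp) (Fin.Embedding.snoc T hj) ?_
  rw [Fin.Embedding.coe_snoc, Fin.Embedding.coe_snoc,
    Fin.snoc_eq_sumElim_comp_finSumFinEquiv_symm, Fin.snoc_eq_sumElim_comp_finSumFinEquiv_symm,
    ← submatrix_submatrix]
  exact (isUnit_submatrix_sumElim_of_isUnit_sub A S T p j
    (sub_ne_zero.2 hne).isUnit).submatrix_equiv _

theorem stmt_1 {D : Type*} [DivisionRing D] {m n : Type*} [Fintype m] [Fintype n]
    (A : Matrix m n D) (k : ℕ) (hkm : k ≤ Fintype.card m) (hkn : k ≤ Fintype.card n)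
    (S : Fin k ↪ m) (T : Fin k ↪ n)
    (hminor : IsUnit (A.submatrix ⇑S ⇑T))
    (hmax : ∀ (S' : Fin (k + 1) ↪ m) (T' : Fin (k + 1) ↪ n),
      ¬ IsUnit (A.submatrix ⇑S' ⇑T')) :
    ∀ p : m, ∃ r : Fin k → D, ∀ j : n, A p j = ∑ s, r s * A (S s) j :=
  stmt_1_general A k S T hminor hmax
end

section
/- Let D be a division ring, A : Matrix m n D with m, n finite, and k < |m|. Suppose there are injections S : Fin k ↪ m and T : Fin k ↪ n such that the k×k submatrix A.submatrix S T is invertible, while every (k+1)×(k+1) square submatrix of A is not invertible. Then the rows of A are left linearly dependent: there exists λ : m → D with λ ≠ 0 and vecMul λ A = 0 (i.e. ∑ i, λ i * A i j = 0 for every j). -/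
/-!
Pick a row `i₀` outside the rows `S` of the invertible minor `B = A[S, T]` and put
`c = A[i₀, T] B⁻¹`, so that the left combination `c A[S, ·]` agrees with row `i₀` on the
columns `T`. For any other column `j`, the bordered `(k+1)`-minor `A[S ∪ {i₀}, T ∪ {j}]` has
Schur complement `A i₀ j - (c A[S, ·]) j` with respect to `B`; since that minor is singular, the
complement vanishes. So row `i₀` is a left combination of the rows `S`, and the rows of `A` are
left linearly dependent.
-/

open Matrix Function

namespace Matrix

theorem submatrix_sumElim {α l m n o : Type*} (A : Matrix m n α) (S : l → m) (T : l → n)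
    (f : o → m) (g : o → n) :
    A.submatrix (Sum.elim S f) (Sum.elim T g) =
      fromBlocks (A.submatrix S T) (A.submatrix S g) (A.submatrix f T) (A.submatrix f g) := by
  ext (a | a) (b | b) <;> rfl

section Ring

-- Mathlib's Schur-complement lemmas assume a commutative ring; the LDU argument does not.

variable {R : Type*} [Ring R] {m n : Type*} [Fintype m] [Fintype n] [DecidableEq m] [DecidableEq n]

theorem isUnit_fromBlocks_zero₁₂_one (C : Matrix n m R) :
    IsUnit (fromBlocks 1 0 C 1 : Matrix (m ⊕ n) (m ⊕ n) R) :=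
  ⟨⟨fromBlocks 1 0 C 1, fromBlocks 1 0 (-C) 1, by simp [fromBlocks_multiply],
    by simp [fromBlocks_multiply]⟩, rfl⟩

theorem isUnit_fromBlocks_zero₂₁_one (B : Matrix m n R) :
    IsUnit (fromBlocks 1 B 0 1 : Matrix (m ⊕ n) (m ⊕ n) R) :=
  ⟨⟨fromBlocks 1 B 0 1, fromBlocks 1 (-B) 0 1, by simp [fromBlocks_multiply],
    by simp [fromBlocks_multiply]⟩, rfl⟩

theorem IsUnit.fromBlocks_zero_zero {A : Matrix m m R} {D : Matrix n n R} (hA : IsUnit A)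
    (hD : IsUnit D) : IsUnit (fromBlocks A 0 0 D) := by
  obtain ⟨a, rfl⟩ := hA
  obtain ⟨d, rfl⟩ := hD
  exact ⟨⟨fromBlocks a 0 0 d, fromBlocks ↑a⁻¹ 0 0 ↑d⁻¹, by simp [fromBlocks_multiply],
    by simp [fromBlocks_multiply]⟩, rfl⟩

theorem isUnit_fromBlocks_of_invertible₁₁ {A : Matrix m m R} {B : Matrix m n R}
    {C : Matrix n m R} {D : Matrix n n R} [Invertible A] (h : IsUnit (D - C * ⅟A * B)) :
    IsUnit (fromBlocks A B C D) := by
  have hLDU : fromBlocks A B C D =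
      fromBlocks 1 0 (C * ⅟A) 1 * fromBlocks A 0 0 (D - C * ⅟A * B) *
        fromBlocks 1 (⅟A * B) 0 1 := by
    simp [fromBlocks_multiply, Matrix.mul_assoc, Matrix.mul_invOf_cancel_left]
  rw [hLDU]
  exact ((isUnit_fromBlocks_zero₁₂_one _).mul
    ((isUnit_of_invertible A).fromBlocks_zero_zero h)).mul (isUnit_fromBlocks_zero₂₁_one _)

end Ring

section DivisionRing

variable {D : Type*} [DivisionRing D] {ι m n : Type*} [Fintype ι] [DecidableEq ι]

theorem isUnit_of_unique_of_ne_zero [Unique ι] {M : Matrix ι ι D}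
    (h : M default default ≠ 0) : IsUnit M := by
  have hM : M = scalar ι (M default default) := by
    ext i j
    rw [Subsingleton.elim i default, Subsingleton.elim j default, scalar_apply, diagonal_apply_eq]
  rw [hM]
  exact h.isUnit.map (scalar ι)

theorem isUnit_submatrix_sumElim_of_ne (A : Matrix m n D) (S : ι → m) (T : ι → n)
    [Invertible (A.submatrix S T)] {i : m} {j : n}
    (h : (A i ∘ T ᵥ* ⅟(A.submatrix S T) ᵥ* A.submatrix S id) j ≠ A i j) :
    IsUnit (A.submatrix (Sum.elim S fun _ : Fin 1 => i) (Sum.elim T fun _ : Fin 1 => j)) := by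
  rw [submatrix_sumElim]
  refine isUnit_fromBlocks_of_invertible₁₁ (isUnit_of_unique_of_ne_zero ?_)
  rw [sub_apply, sub_ne_zero]
  exact h.symm

theorem vecMul_invOf_vecMul_submatrix_eq_row (A : Matrix m n D) {S : ι → m} {T : ι → n}
    (hS : Injective S) (hT : Injective T) [Invertible (A.submatrix S T)] {i : m}
    (hi : i ∉ Set.range S)
    (hmax : ∀ (S' : ι ⊕ Fin 1 → m) (T' : ι ⊕ Fin 1 → n), Injective S' → Injective T' →
      ¬IsUnit (A.submatrix S' T')) :
    A i ∘ T ᵥ* ⅟(A.submatrix S T) ᵥ* A.submatrix S id = A i := by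
  funext j
  by_cases hj : j ∈ Set.range T
  · obtain ⟨q, rfl⟩ := hj
    calc (A i ∘ T ᵥ* ⅟(A.submatrix S T) ᵥ* A.submatrix S id) (T q)
        = (A i ∘ T ᵥ* ⅟(A.submatrix S T) ᵥ* A.submatrix S T) q := rfl
      _ = A i (T q) := by rw [vecMul_vecMul, invOf_mul_self, vecMul_one]; rfl
  · by_contra hne
    refine hmax _ _ ?_ ?_ (isUnit_submatrix_sumElim_of_ne A S T hne)
    · exact hS.sumElim (injective_of_subsingleton _) fun p _ h => hi ⟨p, h⟩
    · exact hT.sumElim (injective_of_subsingleton _) fun p _ h => hj ⟨p, h⟩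

end DivisionRing

end Matrix

theorem stmt_2 {D : Type*} [DivisionRing D] {m n : Type*} [Fintype m] [Fintype n]
    (A : Matrix m n D) (k : ℕ) (hkm : k < Fintype.card m)
    (S : Fin k ↪ m) (T : Fin k ↪ n)
    (hminor : IsUnit (A.submatrix ⇑S ⇑T))
    (hmax : ∀ (S' : Fin (k + 1) ↪ m) (T' : Fin (k + 1) ↪ n),
      ¬ IsUnit (A.submatrix ⇑S' ⇑T')) :
    ∃ l : m → D, l ≠ 0 ∧ Matrix.vecMul l A = 0 := by
  obtain ⟨i₀, hi₀⟩ : ∃ i, i ∉ Set.range S := by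
    by_contra! hS
    exact (Fintype.card_le_of_surjective S hS).not_gt (by simpa using hkm)
  have hmax' (S' : Fin k ⊕ Fin 1 → m) (T' : Fin k ⊕ Fin 1 → n) (hS' : Injective S')
      (hT' : Injective T') : ¬IsUnit (A.submatrix S' T') := fun hunit =>
    hmax ⟨S' ∘ finSumFinEquiv.symm, hS'.comp finSumFinEquiv.symm.injective⟩
      ⟨T' ∘ finSumFinEquiv.symm, hT'.comp finSumFinEquiv.symm.injective⟩
      (hunit.map (reindexRingEquiv D finSumFinEquiv))
  obtain ⟨_⟩ := hminor.nonempty_invertible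
  have hrow := vecMul_invOf_vecMul_submatrix_eq_row A S.injective T.injective hi₀ hmax'
  have hspan : A i₀ ∈ Submodule.span D (A '' Set.range S) := by
    rw [← hrow, vecMul_eq_sum]
    exact Submodule.sum_mem _ fun p _ =>
      Submodule.smul_mem _ _ (Submodule.subset_span ⟨S p, ⟨p, rfl⟩, rfl⟩)
  obtain ⟨l, hl, i, hi⟩ := Fintype.not_linearIndependent_iff.mp fun hli =>
    hli.notMem_span_image hi₀ hspan
  exact ⟨l, fun h => hi (congrFun h i), by rw [vecMul_eq_sum, hl]⟩
end

section
/- Let D be a division ring, A : Matrix m n D with m, n finite, and k < |n|. Suppose there are injections S : Fin k ↪ m and T : Fin k ↪ n such that the k×k submatrix A.submatrix S T is invertible, while every (k+1)×(k+1) square submatrix of A is not invertible. Then the columns of A are right linearly dependent: there exists λ : n → D with λ ≠ 0 and mulVec A λ = 0 (i.e. ∑ j, A i j * λ j = 0 for every i). -/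
/-!
Pick a column `j₀` outside `T` and solve `B μ = A[S, j₀]` for the invertible minor
`B = A[S, T]`. For a row `i` outside `S`, the `(k+1)`-minor on rows `S ∪ {i}` and columns
`T ∪ {j₀}` is singular; since its top-left block `B` is invertible, this forces row `i` to
obey the same relation `∑ t, A i (T t) * μ t = A i j₀` (a determinant-free Schur complement
argument: a kernel vector of the minor must be `(-μ a, a)`, and the last row forces `a = 0`).
So `μ` on `T`, extended by `-1` at `j₀`, is a right dependency among the columns of `A`.
-/

open Matrix

namespace Matrix

theorem mulVec_extend_zero {R m n ι : Type*} [NonUnitalNonAssocSemiring R] [Fintype n] [Fintype ι]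
    {f : ι → n} (hf : Function.Injective f) (A : Matrix m n R) (x : ι → R) :
    A *ᵥ Function.extend f x 0 = A.submatrix id f *ᵥ x := by
  ext i
  refine (Fintype.sum_of_injective f hf _ _ (fun j hj => ?_) (fun t => ?_)).symm
  · simp [Function.extend_apply' _ _ _ hj]
  · simp [hf.extend_apply]

variable {D : Type*} [DivisionRing D]

theorem exists_mulVec_eq_zero_of_not_isUnit {ι : Type*} [Fintype ι] [DecidableEq ι]
    {P : Matrix ι ι D} (hP : ¬IsUnit P) : ∃ v ≠ 0, P *ᵥ v = 0 := by
  rw [IsArtinianRing.isUnit_iff_isLeftRegular, isLeftRegular_iff_mulVec_injective] at hP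
  obtain ⟨v, w, hvw, hne⟩ := Function.not_injective_iff.mp hP
  exact ⟨v - w, sub_ne_zero.mpr hne, by rw [mulVec_sub, hvw, sub_self]⟩

theorem isUnit_of_isUnit_submatrix_castSucc {k : ℕ} {P : Matrix (Fin (k + 1)) (Fin (k + 1)) D}
    (hB : IsUnit (P.submatrix Fin.castSucc Fin.castSucc)) {x : Fin k → D}
    (hx : ∀ s : Fin k, ∑ t : Fin k, P s.castSucc t.castSucc * x t = P s.castSucc (Fin.last k))
    (hlast : ∑ t : Fin k, P (Fin.last k) t.castSucc * x t ≠ P (Fin.last k) (Fin.last k)) :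
    IsUnit P := by
  by_contra hP
  obtain ⟨v, hv0, hv⟩ := exists_mulVec_eq_zero_of_not_isUnit hP
  have hrow (i) :
      ∑ t : Fin k, P i t.castSucc * v t.castSucc + P i (Fin.last k) * v (Fin.last k) = 0 := by
    rw [← Fin.sum_univ_castSucc (fun j => P i j * v j)]
    exact congrFun hv i
  set a := v (Fin.last k)
  have hinit : ∀ t, v t.castSucc = -(x t * a) := by
    have hker : P.submatrix Fin.castSucc Fin.castSucc *ᵥ (fun t => v t.castSucc + x t * a) =
        P.submatrix Fin.castSucc Fin.castSucc *ᵥ 0 := by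
      ext s
      simp only [mulVec, dotProduct, submatrix_apply, mul_add, Finset.sum_add_distrib,
        ← mul_assoc, ← Finset.sum_mul, hx, Pi.zero_apply, mul_zero, Finset.sum_const_zero]
      exact hrow s.castSucc
    exact fun t => eq_neg_of_add_eq_zero_left (congrFun (mulVec_injective_of_isUnit hB hker) t)
  have ha : a = 0 := by
    have hsum := hrow (Fin.last k)
    simp only [hinit, mul_neg, ← mul_assoc, Finset.sum_neg_distrib, ← Finset.sum_mul] at hsum
    have : (P (Fin.last k) (Fin.last k) - ∑ t, P (Fin.last k) t.castSucc * x t) * a = 0 := by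
      rw [sub_mul, sub_eq_neg_add]; exact hsum
    exact (mul_eq_zero.mp this).resolve_left (sub_ne_zero.mpr hlast.symm)
  apply hv0
  ext i
  induction i using Fin.lastCases with
  | last => exact ha
  | cast t => simp [hinit, ha]

end Matrix

theorem stmt_4_general {D : Type*} [DivisionRing D] {m n : Type*} [Fintype n]
    (A : Matrix m n D) (k : ℕ) (hkn : k < Fintype.card n)
    (S : Fin k ↪ m) (T : Fin k ↪ n)
    (hminor : IsUnit (A.submatrix ⇑S ⇑T))
    (hmax : ∀ (S' : Fin (k + 1) ↪ m) (T' : Fin (k + 1) ↪ n),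
      ¬ IsUnit (A.submatrix ⇑S' ⇑T')) :
    ∃ l : n → D, l ≠ 0 ∧ A.mulVec l = 0 := by
  classical
  obtain ⟨j₀, hj₀⟩ : ∃ j₀, j₀ ∉ Set.range T := by
    by_contra! h
    have := Fintype.card_le_of_surjective T (Set.range_eq_univ.mp (Set.eq_univ_of_forall h))
    simp only [Fintype.card_fin] at this
    omega
  obtain ⟨μ, hμ⟩ : ∃ μ, A.submatrix S T *ᵥ μ = fun s => A (S s) j₀ :=
    ⟨(↑hminor.unit⁻¹ : Matrix (Fin k) (Fin k) D) *ᵥ fun s => A (S s) j₀,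
      by rw [mulVec_mulVec, hminor.mul_val_inv, one_mulVec]⟩
  have hcol : ∀ i, ∑ t, A i (T t) * μ t = A i j₀ := by
    intro i
    by_cases hi : i ∈ Set.range S
    · obtain ⟨s, rfl⟩ := hi
      exact congrFun hμ s
    · by_contra hne
      refine hmax (Fin.Embedding.snoc S hi) (Fin.Embedding.snoc T hj₀)
        (isUnit_of_isUnit_submatrix_castSucc (x := μ) ?_ ?_ ?_)
      · simpa [submatrix_submatrix, Function.comp_def] using hminor
      · simpa [mulVec, dotProduct] using congrFun hμ
      · simpa using hne
  refine ⟨Function.extend T μ 0 - Pi.single j₀ 1, fun h => ?_, ?_⟩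
  · simpa [Function.extend_apply' _ _ _ hj₀] using congrFun h j₀
  · rw [mulVec_sub, mulVec_extend_zero T.injective, mulVec_single_one, sub_eq_zero]
    ext i
    exact hcol i

theorem stmt_4 {D : Type*} [DivisionRing D] {m n : Type*} [Fintype m] [Fintype n]
    (A : Matrix m n D) (k : ℕ) (hkn : k < Fintype.card n)
    (S : Fin k ↪ m) (T : Fin k ↪ n)
    (hminor : IsUnit (A.submatrix ⇑S ⇑T))
    (hmax : ∀ (S' : Fin (k + 1) ↪ m) (T' : Fin (k + 1) ↪ n),
      ¬ IsUnit (A.submatrix ⇑S' ⇑T')) :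
    ∃ l : n → D, l ≠ 0 ∧ A.mulVec l = 0 :=
  stmt_4_general A k hkn S T hminor hmax
end

section
/- Let D be a division ring, A : Matrix m n D with m, n finite, and b : n → D. The system of left linear equations vecMul x A = b (i.e. ∑ i, x i * A i j = b j for all j) has a solution x : m → D if and only if the left D-submodule of n → D spanned by the rows of A equals the left D-submodule spanned by the rows of A together with b; equivalently, if and only if finrank D (span D (Set.range (fun i => A i))) = finrank D (span D (Set.range (fun i => A i) ∪ {b})). -/
open Matrix Submodule

theorem Matrix.exists_vecMul_eq_iff_mem_span_rows {R : Type*} [Semiring R] {m n : Type*}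
    [Fintype m] (A : Matrix m n R) (b : n → R) :
    (∃ x : m → R, x ᵥ* A = b) ↔ b ∈ span R (Set.range fun i : m => A i) := by
  rw [← Matrix.row_def, ← range_vecMulLinear]
  rfl

theorem Submodule.span_eq_span_union_singleton_iff {R M : Type*} [Semiring R] [AddCommMonoid M]
    [Module R M] (s : Set M) (x : M) : span R s = span R (s ∪ {x}) ↔ x ∈ span R s := by
  rw [span_union, left_eq_sup, span_singleton_le_iff_mem]

theorem Submodule.finrank_eq_finrank_iff_of_le {K V : Type*} [DivisionRing K] [AddCommGroup V]
    [Module K V] {S₁ S₂ : Submodule K V} [FiniteDimensional K S₂] (hle : S₁ ≤ S₂) :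
    Module.finrank K S₁ = Module.finrank K S₂ ↔ S₁ = S₂ :=
  ⟨eq_of_le_of_finrank_eq hle, fun h => h ▸ rfl⟩

theorem stmt_6_general {D : Type*} [DivisionRing D] {m n : Type*} [Fintype m]
    (A : Matrix m n D) (b : n → D) :
    ((∃ x : m → D, Matrix.vecMul x A = b) ↔
      span D (Set.range fun i : m => A i) =
        span D (Set.range (fun i : m => A i) ∪ {b})) ∧
    ((∃ x : m → D, Matrix.vecMul x A = b) ↔
      Module.finrank D (span D (Set.range fun i : m => A i)) =
        Module.finrank D (span D (Set.range (fun i : m => A i) ∪ {b}))) := by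
  have hspan := (A.exists_vecMul_eq_iff_mem_span_rows b).trans
    (span_eq_span_union_singleton_iff _ b).symm
  have : FiniteDimensional D (span D (Set.range (fun i : m => A i) ∪ {b})) :=
    FiniteDimensional.span_of_finite D ((Set.finite_range _).union (Set.finite_singleton b))
  exact ⟨hspan, hspan.trans (finrank_eq_finrank_iff_of_le (span_mono Set.subset_union_left)).symm⟩

theorem stmt_6 {D : Type*} [DivisionRing D] {m n : Type*} [Fintype m] [Fintype n]
    (A : Matrix m n D) (b : n → D) :
    ((∃ x : m → D, Matrix.vecMul x A = b) ↔
      span D (Set.range fun i : m => A i) =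
        span D (Set.range (fun i : m => A i) ∪ {b})) ∧
    ((∃ x : m → D, Matrix.vecMul x A = b) ↔
      Module.finrank D (span D (Set.range fun i : m => A i)) =
        Module.finrank D (span D (Set.range (fun i : m => A i) ∪ {b}))) :=
  stmt_6_general A b
end

section
/- Over the real quaternions ℍ, the 2×2 matrix A = ![![k, -i], ![k - 1, -i - j]] (where i, j, k are the quaternion units) is not a unit of the matrix ring Matrix (Fin 2) (Fin 2) ℍ, while its transpose Aᵀ = ![![k, k - 1], ![-i, -i - j]] is a unit. In particular, over a division ring the set of RC-nonsingular matrices differs from the set of CR-nonsingular matrices, i.e. the matrix groups RC-GL(2, ℍ) and CR-GL(2, ℍ) are distinct. -/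
open Matrix Quaternion

noncomputable def qi : Quaternion ℝ := ⟨0, 1, 0, 0⟩
noncomputable def qj : Quaternion ℝ := ⟨0, 0, 1, 0⟩
noncomputable def qk : Quaternion ℝ := ⟨0, 0, 0, 1⟩

/-!
With `v = (-(1 + k), 1)` one has `v A = 0`, since `k² = -1` and `k i = j`; a matrix with a nonzero
left null vector is not a unit. On the other side `Aᵀ * !![1 - k, i - j; -1, j] = 2`, and `2` is a
unit; since matrix rings over a division ring are Dedekind-finite, this one-sided inverse already
makes `Aᵀ` a unit.
-/

@[simp] theorem re_qi : qi.re = 0 := rfl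
@[simp] theorem imI_qi : qi.imI = 1 := rfl
@[simp] theorem imJ_qi : qi.imJ = 0 := rfl
@[simp] theorem imK_qi : qi.imK = 0 := rfl
@[simp] theorem re_qj : qj.re = 0 := rfl
@[simp] theorem imI_qj : qj.imI = 0 := rfl
@[simp] theorem imJ_qj : qj.imJ = 1 := rfl
@[simp] theorem imK_qj : qj.imK = 0 := rfl
@[simp] theorem re_qk : qk.re = 0 := rfl
@[simp] theorem imI_qk : qk.imI = 0 := rfl
@[simp] theorem imJ_qk : qk.imJ = 0 := rfl
@[simp] theorem imK_qk : qk.imK = 1 := rfl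

theorem qi_mul_qi : qi * qi = -1 := by ext <;> simp
theorem qj_mul_qj : qj * qj = -1 := by ext <;> simp
theorem qk_mul_qk : qk * qk = -1 := by ext <;> simp
theorem qk_mul_qi : qk * qi = qj := by ext <;> simp
theorem qi_mul_qk : qi * qk = -qj := by ext <;> simp

theorem Matrix.not_isUnit_of_vecMul_eq_zero {R m : Type*} [Semiring R] [Fintype m]
    [DecidableEq m] {A : Matrix m m R} {v : m → R} (hv : v ≠ 0) (hvA : v ᵥ* A = 0) :
    ¬IsUnit A :=
  fun hA => hv (vecMul_injective_of_isUnit hA (hvA.trans (zero_vecMul A).symm))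

theorem vecMul_quaternionMatrix_eq_zero :
    ![-(1 + qk), 1] ᵥ* !![qk, -qi; qk - 1, -qi - qj] = 0 := by
  ext i : 1
  fin_cases i <;> simp [vecMul, dotProduct, add_mul, qk_mul_qk, qk_mul_qi]
  abel

theorem transpose_quaternionMatrix_mul_eq_two :
    !![qk, -qi; qk - 1, -qi - qj]ᵀ * !![1 - qk, qi - qj; -1, qj] = 2 := by
  ext i j : 1
  fin_cases i <;> fin_cases j <;>
    simp [mul_apply, Fin.sum_univ_two, Matrix.ofNat_apply, mul_sub, sub_mul,
      qk_mul_qk, qk_mul_qi, qi_mul_qk, qi_mul_qi, qj_mul_qj] <;>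
    grind

theorem stmt_13 :
    ¬ IsUnit (!![qk, -qi; qk - 1, -qi - qj] : Matrix (Fin 2) (Fin 2) (Quaternion ℝ)) ∧
      IsUnit (!![qk, -qi; qk - 1, -qi - qj] : Matrix (Fin 2) (Fin 2) (Quaternion ℝ))ᵀ := by
  refine ⟨not_isUnit_of_vecMul_eq_zero (by simp) vecMul_quaternionMatrix_eq_zero, ?_⟩
  have two_isUnit : IsUnit (2 : Matrix (Fin 2) (Fin 2) ℍ) := by
    simpa only [map_ofNat] using (IsUnit.mk0 (2 : ℝ) two_ne_zero).map (algebraMap ℝ _)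
  exact isUnit_of_mul_isUnit_left (transpose_quaternionMatrix_mul_eq_two ▸ two_isUnit)
end

section
/- Let D be a division ring and A : Matrix (Fin 2) (Fin 2) D a 2×2 matrix whose (0,0) entry d = A 0 0 is nonzero. Then A is not a unit of the matrix ring if and only if there exist b, c : D such that A 0 1 = d * c, A 1 0 = b * d, and A 1 1 = b * d * c; i.e. A has the form ![![d, d*c], ![b*d, b*d*c]]. -/
open Matrix

section scalars
variable {D : Type*} [DivisionRing D]

private lemma sg1 (d p q e : D) (hd1 : d * d⁻¹ = 1) : d * (d⁻¹ + d⁻¹ * p * e⁻¹ * q * d⁻¹) + p * -(e⁻¹ * q * d⁻¹) = 1 := by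
  calc d * (d⁻¹ + d⁻¹ * p * e⁻¹ * q * d⁻¹) + p * -(e⁻¹ * q * d⁻¹)
      = d * d⁻¹ + (d * d⁻¹) * (p * e⁻¹ * q * d⁻¹) - p * e⁻¹ * q * d⁻¹ := by noncomm_ring
    _ = 1 := by rw [hd1]; noncomm_ring

private lemma sg2 (d p e : D) (hd1 : d * d⁻¹ = 1) : d * -(d⁻¹ * p * e⁻¹) + p * e⁻¹ = 0 := by
  calc d * -(d⁻¹ * p * e⁻¹) + p * e⁻¹
      = -((d * d⁻¹) * (p * e⁻¹)) + p * e⁻¹ := by noncomm_ring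
    _ = 0 := by rw [hd1]; noncomm_ring

private lemma sg3 (d p q r e : D) (he1 : e * e⁻¹ = 1) (hE : e = r - q * d⁻¹ * p) : q * (d⁻¹ + d⁻¹ * p * e⁻¹ * q * d⁻¹) + r * -(e⁻¹ * q * d⁻¹) = 0 := by
  calc q * (d⁻¹ + d⁻¹ * p * e⁻¹ * q * d⁻¹) + r * -(e⁻¹ * q * d⁻¹)
      = q * d⁻¹ - (e * e⁻¹) * (q * d⁻¹) := by rw [hE]; noncomm_ring
    _ = 0 := by rw [he1]; noncomm_ring

private lemma sg4 (d p q r e : D) (he1 : e * e⁻¹ = 1) (hE : e = r - q * d⁻¹ * p) : q * -(d⁻¹ * p * e⁻¹) + r * e⁻¹ = 1 := by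
  calc q * -(d⁻¹ * p * e⁻¹) + r * e⁻¹
      = e * e⁻¹ := by rw [hE]; noncomm_ring
    _ = 1 := he1

private lemma sg5 (d p q e : D) (hd2 : d⁻¹ * d = 1) : (d⁻¹ + d⁻¹ * p * e⁻¹ * q * d⁻¹) * d + -(d⁻¹ * p * e⁻¹) * q = 1 := by
  calc (d⁻¹ + d⁻¹ * p * e⁻¹ * q * d⁻¹) * d + -(d⁻¹ * p * e⁻¹) * q
      = d⁻¹ * d + d⁻¹ * p * e⁻¹ * q * (d⁻¹ * d) - d⁻¹ * p * e⁻¹ * q := by noncomm_ring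
    _ = 1 := by rw [hd2]; noncomm_ring

private lemma sg6 (d p q r e : D) (he2 : e⁻¹ * e = 1) (hE : e = r - q * d⁻¹ * p) : (d⁻¹ + d⁻¹ * p * e⁻¹ * q * d⁻¹) * p + -(d⁻¹ * p * e⁻¹) * r = 0 := by
  calc (d⁻¹ + d⁻¹ * p * e⁻¹ * q * d⁻¹) * p + -(d⁻¹ * p * e⁻¹) * r
      = d⁻¹ * p - (d⁻¹ * p) * (e⁻¹ * e) := by rw [hE]; noncomm_ring
    _ = 0 := by rw [he2]; noncomm_ring

private lemma sg7 (d q e : D) (hd2 : d⁻¹ * d = 1) : -(e⁻¹ * q * d⁻¹) * d + e⁻¹ * q = 0 := by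
  calc -(e⁻¹ * q * d⁻¹) * d + e⁻¹ * q
      = -(e⁻¹ * q * (d⁻¹ * d)) + e⁻¹ * q := by noncomm_ring
    _ = 0 := by rw [hd2]; noncomm_ring

private lemma sg8 (d p q r e : D) (he2 : e⁻¹ * e = 1) (hE : e = r - q * d⁻¹ * p) : -(e⁻¹ * q * d⁻¹) * p + e⁻¹ * r = 1 := by
  calc -(e⁻¹ * q * d⁻¹) * p + e⁻¹ * r
      = e⁻¹ * e := by rw [hE]; noncomm_ring
    _ = 1 := he2

end scalars

private lemma aux_unit {D : Type*} [DivisionRing D] (A : Matrix (Fin 2) (Fin 2) D)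
    (hd : A 0 0 ≠ 0) (he : A 1 1 - A 1 0 * (A 0 0)⁻¹ * A 0 1 ≠ 0) : IsUnit A := by
  obtain ⟨d, p, q, r, h00, h01, h10, h11⟩ :
      ∃ d p q r : D, A 0 0 = d ∧ A 0 1 = p ∧ A 1 0 = q ∧ A 1 1 = r :=
    ⟨_, _, _, _, rfl, rfl, rfl, rfl⟩
  rw [h00] at hd
  rw [h00, h01, h10, h11] at he
  obtain ⟨e, hE⟩ : ∃ e : D, e = r - q * d⁻¹ * p := ⟨_, rfl⟩
  have heo : e ≠ 0 := hE ▸ he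
  have hd1 : d * d⁻¹ = 1 := mul_inv_cancel₀ hd
  have hd2 : d⁻¹ * d = 1 := inv_mul_cancel₀ hd
  have he1 : e * e⁻¹ = 1 := mul_inv_cancel₀ heo
  have he2 : e⁻¹ * e = 1 := inv_mul_cancel₀ heo
  have hA : A = !![d, p; q, r] := by
    rw [Matrix.eta_fin_two A, h00, h01, h10, h11]
  set B : Matrix (Fin 2) (Fin 2) D :=
    !![d⁻¹ + d⁻¹ * p * e⁻¹ * q * d⁻¹, -(d⁻¹ * p * e⁻¹);
       -(e⁻¹ * q * d⁻¹), e⁻¹] with hB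
  have h1 : A * B = 1 := by
    rw [hA, hB, Matrix.mul_fin_two, Matrix.one_fin_two]
    rw [sg1 d p q e hd1, sg2 d p e hd1, sg3 d p q r e he1 hE, sg4 d p q r e he1 hE]
  have h2 : B * A = 1 := by
    rw [hA, hB, Matrix.mul_fin_two, Matrix.one_fin_two]
    rw [sg5 d p q e hd2, sg6 d p q r e he2 hE, sg7 d q e hd2, sg8 d p q r e he2 hE]
  exact ⟨⟨A, B, h1, h2⟩, rfl⟩

theorem stmt_14 {D : Type*} [DivisionRing D] (A : Matrix (Fin 2) (Fin 2) D)
    (hd : A 0 0 ≠ 0) :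
    ¬ IsUnit A ↔ ∃ b c : D,
      A 0 1 = A 0 0 * c ∧ A 1 0 = b * A 0 0 ∧ A 1 1 = b * A 0 0 * c := by
  constructor
  · intro h
    refine ⟨A 1 0 * (A 0 0)⁻¹, (A 0 0)⁻¹ * A 0 1, ?_, ?_, ?_⟩
    · rw [← mul_assoc, mul_inv_cancel₀ hd, one_mul]
    · rw [mul_assoc, inv_mul_cancel₀ hd, mul_one]
    · by_contra hne
      apply h
      apply aux_unit A hd
      intro he0
      apply hne
      rw [sub_eq_zero] at he0
      have hb : A 1 0 * (A 0 0)⁻¹ * A 0 0 = A 1 0 := by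
        rw [mul_assoc, inv_mul_cancel₀ hd, mul_one]
      rw [hb, ← mul_assoc]
      exact he0
  · rintro ⟨b, c, h1, h2, h3⟩ hu
    obtain ⟨u, hu⟩ := hu
    set C : Matrix (Fin 2) (Fin 2) D := (u⁻¹).val with hC
    have hAB : A * C = 1 := by rw [← hu, hC]; exact u.mul_inv
    have h01 : A 0 0 * C 0 1 + A 0 1 * C 1 1 = 0 := by
      have := congrFun (congrFun hAB 0) 1
      rw [Matrix.mul_apply, Fin.sum_univ_two] at this
      simpa [Matrix.one_apply] using this
    have h11 : A 1 0 * C 0 1 + A 1 1 * C 1 1 = 1 := by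
      have := congrFun (congrFun hAB 1) 1
      rw [Matrix.mul_apply, Fin.sum_univ_two] at this
      simpa [Matrix.one_apply] using this
    have key : (1 : D) = b * (A 0 0 * C 0 1 + A 0 1 * C 1 1) := by
      rw [← h11, h2, h3, h1]; noncomm_ring
    rw [h01, mul_zero] at key
    exact one_ne_zero key
end
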